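/- Let M ∈ ℝ^{p×p} be symmetric with eigenvalues λ_1 ≥ ... ≥ λ_p and orthonormal eigenvectors v_1, ..., v_p, and let 0 < q_1 < ... < q_d < p be a signature. Then for every flag S_1 ⊆ ... ⊆ S_d of ℝ^p with dim S_k = q_k, one has Σ_{k=1}^d tr(Π_{S_k} M) ≤ Σ_{k=1}^d Σ_{j=1}^{q_k} λ_j, and equality holds for the eigenflag S_k* = span(v_1, ..., v_{q_k}). -/

import Mathlib

open Matrix Finset

/-- The squared Frobenius norm of a real matrix. -/
noncomputable def frobSq {p n : ℕ} (M : Matrix (Fin p) (Fin n) ℝ) : ℝ :=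
  Matrix.trace (Mᵀ * M)

/-- `P k`, for `k = 1, …, d`, are the orthogonal projection matrices onto a flag
`S_1 ⊆ ⋯ ⊆ S_d` of subspaces of `ℝ^p` with `dim S_k = q k`: each `P k` is a symmetric
idempotent of rank `q k`, and nestedness is `P l * P k = P k` for `k ≤ l`. -/
def IsProjFlag (p d : ℕ) (q : ℕ → ℕ) (P : ℕ → Matrix (Fin p) (Fin p) ℝ) : Prop :=
  (∀ k, 1 ≤ k → k ≤ d → (P k).IsSymm) ∧
  (∀ k, 1 ≤ k → k ≤ d → P k * P k = P k) ∧
  (∀ k, 1 ≤ k → k ≤ d → (P k).rank = q k) ∧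
  (∀ k l, 1 ≤ k → k ≤ l → l ≤ d → P l * P k = P k)

/-- Outer product `u_j u_jᵀ` of the `j`-th column of `U`. -/
noncomputable def colOuter {p : ℕ} (U : Matrix (Fin p) (Fin p) ℝ) (j : Fin p) :
    Matrix (Fin p) (Fin p) ℝ :=
  Matrix.vecMulVec (fun i => U i j) (fun i => U i j)

/-- Orthogonal projection matrix onto the span of the first `m` columns of `V`
(for `V` with orthonormal columns, this is `∑_{j ≤ m} v_j v_jᵀ`). -/
noncomputable def leadProj {p : ℕ} (V : Matrix (Fin p) (Fin p) ℝ) (m : ℕ) :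
    Matrix (Fin p) (Fin p) ℝ :=
  ∑ j ∈ Finset.univ.filter (fun j : Fin p => (j : ℕ) < m), colOuter V j

-- trace of idempotent equals rank
lemma trace_eq_rank_of_idem {p : ℕ} (P : Matrix (Fin p) (Fin p) ℝ) (h : P * P = P) :
    Matrix.trace P = (P.rank : ℝ) := by
  have hproj : LinearMap.IsProj (LinearMap.range P.mulVecLin) P.mulVecLin := by
    constructor
    · intro x; exact LinearMap.mem_range_self _ x
    · rintro x ⟨y, rfl⟩
      have := congrArg (fun A : Matrix (Fin p) (Fin p) ℝ => A.mulVecLin y) h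
      simpa [Matrix.mulVecLin_mul] using this
  have htr := hproj.trace
  have h1 : LinearMap.trace ℝ (Fin p → ℝ) P.mulVecLin = Matrix.trace P := by
    rw [LinearMap.trace_eq_matrix_trace ℝ (Pi.basisFun ℝ (Fin p)),
      LinearMap.toMatrix_eq_toMatrix', ← Matrix.toLin'_apply' P, LinearMap.toMatrix'_toLin']
  rw [← h1, htr]
  rfl

-- card of the filter
lemma card_filter_lt {p m : ℕ} (hm : m ≤ p) :
    (Finset.univ.filter (fun j : Fin p => (j : ℕ) < m)).card = m := by
  have hmap : (Finset.univ.filter (fun j : Fin p => (j : ℕ) < m)).map Fin.valEmbedding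
      = Finset.range m := by
    ext a
    simp only [Finset.mem_map, Finset.mem_filter, Finset.mem_univ, true_and, Finset.mem_range,
      Fin.valEmbedding_apply]
    constructor
    · rintro ⟨j, hj, rfl⟩; exact hj
    · intro ha; exact ⟨⟨a, lt_of_lt_of_le ha hm⟩, ha, rfl⟩
  rw [← Finset.card_map Fin.valEmbedding, hmap, Finset.card_range]

-- combinatorial core
lemma sum_mul_le_top {p m : ℕ} (hm : m < p) (ℓ : Fin p → ℝ)
    (hsort : ∀ i j : Fin p, i ≤ j → ℓ j ≤ ℓ i)
    (t : Fin p → ℝ) (h0 : ∀ j, 0 ≤ t j) (h1 : ∀ j, t j ≤ 1)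
    (hsum : ∑ j, t j = (m : ℝ)) :
    ∑ j, t j * ℓ j ≤ ∑ j ∈ Finset.univ.filter (fun j : Fin p => (j : ℕ) < m), ℓ j := by
  set c := ℓ ⟨m, hm⟩ with hc
  have key : ∀ j : Fin p, t j * ℓ j ≤ c * t j + (if (j : ℕ) < m then ℓ j - c else 0) := by
    intro j
    by_cases h : (j : ℕ) < m
    · have hcl : c ≤ ℓ j := hsort j ⟨m, hm⟩ (by simp [Fin.le_def]; omega)
      have := h1 j
      simp only [if_pos h]
      nlinarith
    · have hcl : ℓ j ≤ c := hsort ⟨m, hm⟩ j (by simp [Fin.le_def]; omega)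
      have := h0 j
      simp only [if_neg h]
      nlinarith
  calc ∑ j, t j * ℓ j ≤ ∑ j, (c * t j + (if (j : ℕ) < m then ℓ j - c else 0)) :=
        Finset.sum_le_sum (fun j _ => key j)
    _ = c * (m : ℝ) + (∑ j ∈ Finset.univ.filter (fun j : Fin p => (j : ℕ) < m), (ℓ j - c)) := by
        rw [Finset.sum_add_distrib, ← Finset.mul_sum, hsum, Finset.sum_ite, Finset.sum_const_zero,
          add_zero]
    _ = ∑ j ∈ Finset.univ.filter (fun j : Fin p => (j : ℕ) < m), ℓ j := by
        rw [Finset.sum_sub_distrib, Finset.sum_const, card_filter_lt hm.le]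
        ring

-- nonnegativity of diagonal entries of Xᵀ P X for symmetric idempotent P
lemma diag_conj_nonneg {p : ℕ} (P X : Matrix (Fin p) (Fin p) ℝ)
    (hsymm : P.IsSymm) (hidem : P * P = P) (j : Fin p) :
    0 ≤ (Xᵀ * P * X) j j := by
  have hXP : Xᵀ * P * X = (P * X)ᵀ * (P * X) := by
    have h2 : (P * X)ᵀ * (P * X) = Xᵀ * (P * P) * X := by
      rw [Matrix.transpose_mul, hsymm.eq]; noncomm_ring
    rw [h2, hidem]
  rw [hXP, Matrix.mul_apply]
  refine Finset.sum_nonneg fun i _ => ?_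
  rw [Matrix.transpose_apply]
  exact mul_self_nonneg _

-- per-k Ky Fan inequality
lemma kyfan_single {p : ℕ} (m : ℕ) (hm : m < p)
    (ℓ : Fin p → ℝ) (V : Matrix (Fin p) (Fin p) ℝ) (hV : Vᵀ * V = 1)
    (hsort : ∀ i j : Fin p, i ≤ j → ℓ j ≤ ℓ i)
    (P : Matrix (Fin p) (Fin p) ℝ) (hsymm : P.IsSymm) (hidem : P * P = P)
    (hrank : P.rank = m) :
    Matrix.trace (P * (V * Matrix.diagonal ℓ * Vᵀ))
      ≤ ∑ j ∈ Finset.univ.filter (fun j : Fin p => (j : ℕ) < m), ℓ j := by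
  have hVV : V * Vᵀ = 1 := mul_eq_one_comm.mp hV
  set Q := Vᵀ * P * V with hQ
  have htr : Matrix.trace (P * (V * Matrix.diagonal ℓ * Vᵀ)) = ∑ j, Q j j * ℓ j := by
    have : P * (V * Matrix.diagonal ℓ * Vᵀ) = (P * V * Matrix.diagonal ℓ) * Vᵀ := by
      noncomm_ring
    rw [this, Matrix.trace_mul_comm, hQ]
    have : Vᵀ * (P * V * Matrix.diagonal ℓ) = (Vᵀ * P * V) * Matrix.diagonal ℓ := by
      noncomm_ring
    rw [this]
    simp [Matrix.trace, Matrix.diag, Matrix.mul_diagonal]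
  have h0 : ∀ j, 0 ≤ Q j j := fun j => diag_conj_nonneg P V hsymm hidem j
  have h1 : ∀ j, Q j j ≤ 1 := by
    intro j
    have hs : (1 - P).IsSymm := by
      rw [Matrix.IsSymm, Matrix.transpose_sub, Matrix.transpose_one, hsymm.eq]
    have hi : (1 - P) * (1 - P) = 1 - P := by
      rw [sub_mul, one_mul, mul_sub, mul_one, hidem]; noncomm_ring
    have := diag_conj_nonneg (1 - P) V hs hi j
    have hexp : Vᵀ * (1 - P) * V = 1 - Q := by
      rw [Matrix.mul_sub, Matrix.mul_one, Matrix.sub_mul, hV, ← hQ]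
    rw [hexp] at this
    have : (0 : ℝ) ≤ 1 - Q j j := by
      simpa [Matrix.sub_apply, Matrix.one_apply_eq] using this
    linarith
  have hsum : ∑ j, Q j j = (m : ℝ) := by
    have : ∑ j, Q j j = Matrix.trace Q := rfl
    rw [this, hQ, Matrix.trace_mul_cycle, hVV, Matrix.one_mul,
      trace_eq_rank_of_idem P hidem, hrank]
  calc Matrix.trace (P * (V * Matrix.diagonal ℓ * Vᵀ)) = ∑ j, Q j j * ℓ j := htr
    _ ≤ _ := sum_mul_le_top hm ℓ hsort (fun j => Q j j) h0 h1 hsum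

-- equality for leading projector
lemma trace_colOuter {p : ℕ} (j : Fin p) (ℓ : Fin p → ℝ) (V : Matrix (Fin p) (Fin p) ℝ)
    (hV : Vᵀ * V = 1) :
    Matrix.trace (colOuter V j * (V * Matrix.diagonal ℓ * Vᵀ)) = ℓ j := by
  set u : Fin p → ℝ := fun i => V i j with hu
  have htr : ∀ B : Matrix (Fin p) (Fin p) ℝ,
      Matrix.trace (colOuter V j * B) = u ⬝ᵥ (B *ᵥ u) := by
    intro B
    simp only [colOuter, Matrix.trace, Matrix.diag, Matrix.mul_apply, Matrix.vecMulVec_apply,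
      dotProduct, Matrix.mulVec]
    rw [Finset.sum_comm]
    congr 1; ext a
    rw [Finset.mul_sum]
    congr 1; ext i
    simp only [hu]
    ring
  rw [htr]
  have hue : u = V *ᵥ Pi.single j 1 := by
    ext i; simp [hu]
  have hBu : (V * Matrix.diagonal ℓ * Vᵀ) *ᵥ u = ℓ j • u := by
    rw [hue, Matrix.mulVec_mulVec, Matrix.mul_assoc, Matrix.mul_assoc, hV, Matrix.mul_one,
      ← Matrix.mulVec_mulVec]
    rw [Matrix.diagonal_mulVec_single]
    rw [Matrix.mulVec_single]
    ext i
    simp [hu, mul_comm]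
  rw [hBu]
  have huu : u ⬝ᵥ u = 1 := by
    have := congrFun (congrFun hV j) j
    simpa [Matrix.mul_apply, dotProduct, hu, Matrix.one_apply_eq] using this
  rw [dotProduct_smul, huu]
  simp

lemma trace_leadProj_eq {p : ℕ} (m : ℕ) (ℓ : Fin p → ℝ) (V : Matrix (Fin p) (Fin p) ℝ)
    (hV : Vᵀ * V = 1) :
    Matrix.trace (leadProj V m * (V * Matrix.diagonal ℓ * Vᵀ))
      = ∑ j ∈ Finset.univ.filter (fun j : Fin p => (j : ℕ) < m), ℓ j := by
  rw [leadProj, Finset.sum_mul, Matrix.trace_sum]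
  exact Finset.sum_congr rfl fun j _ => trace_colOuter j ℓ V hV

/-- Ky Fan principle for flags: for a symmetric `M` with sorted
eigendecomposition `M = V diag(λ) Vᵀ`, every flag of signature `(p, q_{1:d})` satisfies
`∑ₖ tr(Π_{S_k} M) ≤ ∑ₖ ∑_{j=1}^{q_k} λ_j`, with equality for the eigenflag
`S_k* = span(v_1, …, v_{q_k})`. -/
theorem flag_ky_fan
    {p d : ℕ} (hd : 1 ≤ d)
    (q : ℕ → ℕ) (hq1 : 0 < q 1)
    (hmono : ∀ k, 1 ≤ k → k < d → q k < q (k + 1)) (hqd : q d < p)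
    (M : Matrix (Fin p) (Fin p) ℝ)
    (ℓ : Fin p → ℝ) (V : Matrix (Fin p) (Fin p) ℝ)
    (hV : Vᵀ * V = 1)
    (hsort : ∀ i j : Fin p, i ≤ j → ℓ j ≤ ℓ i)
    (hM : M = V * Matrix.diagonal ℓ * Vᵀ)
    (P : ℕ → Matrix (Fin p) (Fin p) ℝ)
    (hP : IsProjFlag p d q P) :
    (∑ k ∈ Finset.Icc 1 d, Matrix.trace (P k * M)
        ≤ ∑ k ∈ Finset.Icc 1 d,
            ∑ j ∈ Finset.univ.filter (fun j : Fin p => (j : ℕ) < q k), ℓ j) ∧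
      ∑ k ∈ Finset.Icc 1 d, Matrix.trace (leadProj V (q k) * M)
        = ∑ k ∈ Finset.Icc 1 d,
            ∑ j ∈ Finset.univ.filter (fun j : Fin p => (j : ℕ) < q k), ℓ j := by
  obtain ⟨hPsymm, hPidem, hPrank, _⟩ := hP
  have hqp : ∀ k, 1 ≤ k → k ≤ d → q k < p := by
    intro k hk1 hkd
    have hmono' : ∀ l, k ≤ l → l ≤ d → q k ≤ q l := by
      intro l hkl
      induction l, hkl using Nat.le_induction with
      | base => intro _; exact le_rfl
      | succ n hn ih =>
        intro hnd
        have hnd' : n < d := Nat.lt_of_succ_le hnd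
        exact le_trans (ih hnd'.le) (le_of_lt (hmono n (le_trans hk1 hn) hnd'))
    exact lt_of_le_of_lt (hmono' d hkd le_rfl) hqd
  constructor
  · apply Finset.sum_le_sum
    intro k hk
    rw [Finset.mem_Icc] at hk
    rw [hM]
    exact kyfan_single (q k) (hqp k hk.1 hk.2) ℓ V hV hsort (P k) (hPsymm k hk.1 hk.2)
      (hPidem k hk.1 hk.2) (hPrank k hk.1 hk.2)
  · apply Finset.sum_congr rfl
    intro k hk
    rw [hM]
    exact trace_leadProj_eq (q k) ℓ V hV
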